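/- arXiv:2509.12907 — 6 statements merged into one kernel-verified Lean document; each statement's English description precedes it below -/
import Mathlib

section
/- Let Assumption 1 hold and assume moreover that f is λ-strongly convex on the closed ball B̄(x*, δ) for some δ, λ > 0. For s > 0 and x ∈ ℝ^d, let P_s(x) denote the unique minimizer over B̄(x*, δ) of y ↦ f(y) + ‖y − x‖²/(2s) (it is unique by strong convexity). Let γ > 0, let t ↦ γ_t be a continuous function with γ_t ≥ γ/2 for all t ≥ 0, let r : [0,∞) → ℝ^d be continuous, let α > 0, and set c1 := 1/(1 + 2/(λγ)). If y : [0,∞) → ℝ^d is differentiable and satisfies ẏ_t = P_{γ_t}(y_t) − y_t + r_t/α for all t ≥ 0, then for all t ≥ 0: ‖y_t − x*‖² ≤ e^{−c1 t} ‖y_0 − x*‖² + (1/c1) ∫_0^t (‖r_s‖²/α²) e^{−c1(t−s)} ds. -/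
open MeasureTheory Real Set

-- Clipping operator `clip_R`.
open Classical in
noncomputable def clipR {d : ℕ} (R : ℝ) (x : EuclideanSpace ℝ (Fin d)) : EuclideanSpace ℝ (Fin d) :=
  if x = 0 then 0 else (min R ‖x‖ / ‖x‖) • x

/-- Consensus point `θ_α(ρ)` of a measure `ρ`. -/
noncomputable def thetaAlpha {d : ℕ} (α : ℝ) (f : EuclideanSpace ℝ (Fin d) → ℝ)
    (ρ : Measure (EuclideanSpace ℝ (Fin d))) : EuclideanSpace ℝ (Fin d) :=
  (∫ y, Real.exp (-α * f y) ∂ρ)⁻¹ • ∫ y, Real.exp (-α * f y) • y ∂ρ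

/-- Gaussian measure on `ℝ^d` with mean `m` and covariance `σ2 • I_d`. -/
noncomputable def gaussianE (d : ℕ) (m : EuclideanSpace ℝ (Fin d)) (σ2 : ℝ) :
    Measure (EuclideanSpace ℝ (Fin d)) :=
  volume.withDensity fun y =>
    ENNReal.ofReal ((2 * Real.pi * σ2) ^ (-(d : ℝ) / 2) * Real.exp (-‖y - m‖ ^ 2 / (2 * σ2)))

/-!
With `V t = ‖y t - x*‖²`, strong convexity of `f + ‖· - x‖² / (2s)` on the ball, compared at its
minimizer `P_s(x)` and at `x*`, together with strong convexity of `f` at its minimizer `x*`, gives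
`(1 + λ s) ⟪x - x*, P_s(x) - x*⟫ ≤ ‖x - x*‖²`. Since `s = γ_t ≥ γ / 2`, the proximal part of the
drift therefore contracts `V` at rate `c₁`, and Young's inequality absorbs the perturbation
`r_t / α`, so that `V' ≤ -c₁ V + ‖r_t‖² / (c₁ α²)`. Integrating this linear differential
inequality against `exp (c₁ t)` gives the bound.
-/

open Filter Topology
open scoped RealInnerProductSpace

section

variable {E : Type*} [NormedAddCommGroup E] {s : Set E}

theorem UniformConvexOn.add_le_of_isMinOn [NormedSpace ℝ E] {φ : ℝ → ℝ} {f : E → ℝ} {x y : E}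
    (hf : UniformConvexOn s φ f) (hmin : IsMinOn f s x) (hx : x ∈ s) (hy : y ∈ s) :
    f x + φ ‖x - y‖ ≤ f y := by
  have key : ∀ b ∈ Ioo (0 : ℝ) 1, (1 - b) * φ ‖x - y‖ ≤ f y - f x := by
    intro b ⟨hb0, hb1⟩
    have hconv := hf.2 hx hy (sub_nonneg.2 hb1.le) hb0.le (sub_add_cancel 1 b)
    have hle : f x ≤ f ((1 - b) • x + b • y) :=
      hmin (hf.1 hx hy (sub_nonneg.2 hb1.le) hb0.le (sub_add_cancel 1 b))
    simp only [smul_eq_mul] at hconv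
    nlinarith
  have hlim : Tendsto (fun b : ℝ => (1 - b) * φ ‖x - y‖) (𝓝[>] 0) (𝓝 (φ ‖x - y‖)) := by
    refine tendsto_nhdsWithin_of_tendsto_nhds ?_
    exact (by fun_prop : Continuous fun b : ℝ => (1 - b) * φ ‖x - y‖).tendsto' 0 _ (by simp)
  linarith [le_of_tendsto hlim (eventually_of_mem (Ioo_mem_nhdsGT one_pos) key)]

variable [InnerProductSpace ℝ E]

theorem StrongConvexOn.add {m n : ℝ} {f g : E → ℝ} (hf : StrongConvexOn s m f)
    (hg : StrongConvexOn s n g) : StrongConvexOn s (m + n) (f + g) := by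
  unfold StrongConvexOn
  convert UniformConvexOn.add hf hg using 2 with r
  simp only [Pi.add_apply]
  ring

theorem strongConvexOn_norm_sub_sq_div (hs : Convex ℝ s) (x : E) (τ : ℝ) :
    StrongConvexOn s τ⁻¹ (fun y => ‖y - x‖ ^ 2 / (2 * τ)) := by
  rw [strongConvexOn_iff_convex]
  have h : (fun y : E => ‖y - x‖ ^ 2 / (2 * τ) - τ⁻¹ / 2 * ‖y‖ ^ 2)
      = fun y => ‖x‖ ^ 2 / (2 * τ) + innerSL ℝ ((-τ⁻¹) • x) y := by
    funext y
    rw [innerSL_apply_apply, norm_sub_sq_real, real_inner_smul_left, real_inner_comm]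
    ring
  rw [h]
  exact (convexOn_const _ hs).add ((innerSL ℝ ((-τ⁻¹) • x)).toLinearMap.convexOn hs)

theorem mul_inner_le_norm_sq_of_isMinOn_prox {f : E → ℝ} {lam τ : ℝ} {x₀ x P : E}
    (hlam : 0 ≤ lam) (hτ : 0 < τ) (hf : StrongConvexOn s lam f) (hx₀ : IsMinOn f s x₀)
    (hx₀s : x₀ ∈ s) (hP : IsMinOn (fun y => f y + ‖y - x‖ ^ 2 / (2 * τ)) s P) (hPs : P ∈ s) :
    (1 + lam * τ) * ⟪x - x₀, P - x₀⟫ ≤ ‖x - x₀‖ ^ 2 := by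
  have hprox := UniformConvexOn.add_le_of_isMinOn
    (hf.add (strongConvexOn_norm_sub_sq_div hf.1 x τ)) hP hPs hx₀s
  have hf₀ := UniformConvexOn.add_le_of_isMinOn hf hx₀ hx₀s hPs
  simp only [Pi.add_apply] at hprox
  rw [← sub_sub_sub_cancel_right P x x₀, ← neg_sub x x₀, norm_neg, norm_sub_sq_real] at hprox
  rw [← neg_sub P x₀, norm_neg] at hf₀
  set u := P - x₀
  set v := x - x₀
  set k := 1 + lam * τ
  have hk : 0 ≤ k := by positivity
  have hu : k * ‖u‖ ^ 2 ≤ ⟪u, v⟫ := by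
    field_simp at hprox
    nlinarith
  have huv := real_inner_le_norm u v
  -- Cauchy–Schwarz turns `hu` into `k ‖u‖ ≤ ‖v‖`, so `k ⟪u, v⟫ ≤ k ‖u‖ ‖v‖ ≤ ‖v‖²`.
  rw [real_inner_comm]
  nlinarith [sq_nonneg (‖v‖ - k * ‖u‖), mul_le_mul_of_nonneg_left (hu.trans huv) hk,
    mul_le_mul_of_nonneg_left huv hk]

theorem two_inner_sub_add_le {c : ℝ} (hc : 0 < c) {v u w : E}
    (h : ⟪v, u⟫ ≤ (1 - c) * ‖v‖ ^ 2) :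
    2 * ⟪v, u - v + w⟫ ≤ -c * ‖v‖ ^ 2 + c⁻¹ * ‖w‖ ^ 2 := by
  have hyoung : 2 * ⟪v, w⟫ ≤ c * ‖v‖ ^ 2 + c⁻¹ * ‖w‖ ^ 2 :=
    calc 2 * ⟪v, w⟫ ≤ 2 * ‖v‖ * ‖w‖ := by linarith [real_inner_le_norm v w]
      _ ≤ c * ‖v‖ ^ 2 + c⁻¹ * ‖w‖ ^ 2 := two_mul_le_add_mul_sq hc
  rw [inner_add_right, inner_sub_right, real_inner_self_eq_norm_sq]
  linarith

theorem two_inner_prox_sub_add_le {f : E → ℝ} {lam γ τ : ℝ} {x₀ x P w : E}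
    (hlam : 0 < lam) (hγ : 0 < γ) (hτ : γ / 2 ≤ τ) (hf : StrongConvexOn s lam f)
    (hx₀ : IsMinOn f s x₀) (hx₀s : x₀ ∈ s)
    (hP : IsMinOn (fun y => f y + ‖y - x‖ ^ 2 / (2 * τ)) s P) (hPs : P ∈ s) :
    2 * ⟪x - x₀, P - x + w⟫
      ≤ -(1 + 2 / (lam * γ))⁻¹ * ‖x - x₀‖ ^ 2 + (1 + 2 / (lam * γ))⁻¹⁻¹ * ‖w‖ ^ 2 := by
  have hτ0 : 0 < τ := by linarith
  have hprox := mul_inner_le_norm_sq_of_isMinOn_prox hlam.le hτ0 hf hx₀ hx₀s hP hPs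
  set c := (1 + 2 / (lam * γ))⁻¹
  have hc1 : 1 - c = 2 / (lam * γ + 2) := by
    simp only [c]
    field_simp
    ring
  have hk : 1 ≤ (1 - c) * (1 + lam * τ) := by
    rw [hc1, div_mul_eq_mul_div, le_div_iff₀ (by positivity)]
    nlinarith [mul_le_mul_of_nonneg_left hτ hlam.le]
  have hc1_nonneg : 0 ≤ 1 - c := by rw [hc1]; positivity
  have hcontract : ⟪x - x₀, P - x₀⟫ ≤ (1 - c) * ‖x - x₀‖ ^ 2 := by
    rcases le_total ⟪x - x₀, P - x₀⟫ 0 with hneg | hpos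
    · exact hneg.trans (by positivity)
    · nlinarith [mul_le_mul_of_nonneg_left hprox hc1_nonneg]
  rw [← sub_sub_sub_cancel_right P x x₀]
  exact two_inner_sub_add_le (by positivity) hcontract

end

theorem le_exp_mul_add_integral_of_hasDerivAt_le {V V' g : ℝ → ℝ} {a b c : ℝ} (hab : a ≤ b)
    (hV : ContinuousOn V (Icc a b)) (hV' : ∀ x ∈ Ioo a b, HasDerivAt V (V' x) x)
    (hg : ContinuousOn g (Icc a b)) (hle : ∀ x ∈ Ioo a b, V' x ≤ -c * V x + g x) :
    V b ≤ exp (-c * (b - a)) * V a + ∫ s in a..b, g s * exp (-c * (b - s)) := by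
  set G : ℝ → ℝ := fun s => exp (c * s) * g s
  have hG : ContinuousOn G (Icc a b) :=
    (by fun_prop : Continuous fun s => exp (c * s)).continuousOn.mul hg
  set W : ℝ → ℝ := fun x => exp (c * x) * V x - ∫ s in a..x, G s
  have hW : AntitoneOn W (Icc a b) := by
    refine antitoneOn_of_hasDerivWithinAt_nonpos (convex_Icc a b)
      (f' := fun x => exp (c * x) * (V' x + c * V x - g x)) ?_ ?_ ?_
    · have hprim := intervalIntegral.continuousOn_primitive_interval (μ := volume)
        (a := a) (b := b) (by rw [uIcc_of_le hab]; exact hG.integrableOn_Icc)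
      rw [uIcc_of_le hab] at hprim
      exact ((by fun_prop : Continuous fun s => exp (c * s)).continuousOn.mul hV).sub hprim
    · intro x hx
      rw [interior_Icc] at hx
      have hGx : HasDerivAt (fun x => ∫ s in a..x, G s) (G x) x :=
        intervalIntegral.integral_hasDerivAt_right
          ((hG.mono (Icc_subset_Icc_right hx.2.le)).intervalIntegrable_of_Icc hx.1.le)
          ((hG.mono Ioo_subset_Icc_self).stronglyMeasurableAtFilter isOpen_Ioo x hx)
          (hG.continuousAt (Icc_mem_nhds hx.1 hx.2))
      have hE : HasDerivAt (fun x => exp (c * x)) (exp (c * x) * c) x := by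
        simpa using ((hasDerivAt_id x).const_mul c).exp
      exact (((hE.mul (hV' x hx)).sub hGx).congr_deriv (by ring)).hasDerivWithinAt
    · intro x hx
      rw [interior_Icc] at hx
      exact mul_nonpos_of_nonneg_of_nonpos (exp_pos _).le (by linarith [hle x hx])
  have hWab := hW (left_mem_Icc.2 hab) (right_mem_Icc.2 hab) hab
  simp only [W, intervalIntegral.integral_same, sub_zero] at hWab
  have hint : ∫ s in a..b, g s * exp (-c * (b - s)) = exp (-c * b) * ∫ s in a..b, G s := by
    rw [← intervalIntegral.integral_const_mul]
    congr 1
    funext s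
    rw [show -c * (b - s) = -c * b + c * s by ring, exp_add]
    ring
  have hone : exp (-c * b) * exp (c * b) = 1 := by rw [← exp_add]; simp
  calc V b = exp (-c * b) * (exp (c * b) * V b) := by rw [← mul_assoc, hone, one_mul]
    _ ≤ exp (-c * b) * (exp (c * a) * V a + ∫ s in a..b, G s) :=
      mul_le_mul_of_nonneg_left (by linarith) (exp_pos _).le
    _ = exp (-c * (b - a)) * V a + ∫ s in a..b, g s * exp (-c * (b - s)) := by
      rw [hint, show -c * (b - a) = -c * b + c * a by ring, exp_add]
      ring

theorem stmt4_general {d : ℕ}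
    (f : EuclideanSpace ℝ (Fin d) → ℝ) (xstar : EuclideanSpace ℝ (Fin d))
    (hmin : ∀ x, x ≠ xstar → f xstar < f x)
    (δ lam : ℝ) (hδ : 0 < δ) (hlam : 0 < lam)
    -- `f` is `λ`-strongly convex on the closed ball `B̄(x*, δ)`
    (hconv : ConvexOn ℝ (Metric.closedBall xstar δ) (fun y => f y - lam / 2 * ‖y‖ ^ 2))
    -- the proximal-type operator `P_s(x)`
    (p : ℝ → EuclideanSpace ℝ (Fin d) → EuclideanSpace ℝ (Fin d))
    (hp : ∀ s : ℝ, 0 < s → ∀ x, p s x ∈ Metric.closedBall xstar δ ∧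
      ∀ y ∈ Metric.closedBall xstar δ,
        f (p s x) + ‖p s x - x‖ ^ 2 / (2 * s) ≤ f y + ‖y - x‖ ^ 2 / (2 * s))
    (γ : ℝ) (hγ : 0 < γ)
    (γt : ℝ → ℝ) (hγt' : ∀ t : ℝ, 0 ≤ t → γ / 2 ≤ γt t)
    (r : ℝ → EuclideanSpace ℝ (Fin d)) (hr : ContinuousOn r (Set.Ici 0))
    (α : ℝ)
    (y : ℝ → EuclideanSpace ℝ (Fin d))
    (hy : ∀ t : ℝ, 0 ≤ t → HasDerivAt y (p (γt t) (y t) - y t + α⁻¹ • r t) t) :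
    ∀ t : ℝ, 0 ≤ t →
      ‖y t - xstar‖ ^ 2
        ≤ Real.exp (-(1 + 2 / (lam * γ))⁻¹ * t) * ‖y 0 - xstar‖ ^ 2
          + ((1 + 2 / (lam * γ))⁻¹)⁻¹
            * ∫ s in (0:ℝ)..t, ‖r s‖ ^ 2 / α ^ 2
                * Real.exp (-(1 + 2 / (lam * γ))⁻¹ * (t - s)) := by
  intro t ht
  set c := (1 + 2 / (lam * γ))⁻¹
  have hxstar : IsMinOn f (Metric.closedBall xstar δ) xstar := isMinOn_iff.2 fun z _ => by
    rcases eq_or_ne z xstar with rfl | hz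
    exacts [le_rfl, (hmin z hz).le]
  have hdrift : ∀ τ ∈ Ioo 0 t, 2 * ⟪y τ - xstar, p (γt τ) (y τ) - y τ + α⁻¹ • r τ⟫
      ≤ -c * ‖y τ - xstar‖ ^ 2 + c⁻¹ * (‖r τ‖ ^ 2 / α ^ 2) := by
    intro τ hτ
    obtain ⟨hPs, hP⟩ := hp (γt τ) (by linarith [hγt' τ hτ.1.le]) (y τ)
    have hw : ‖α⁻¹ • r τ‖ ^ 2 = ‖r τ‖ ^ 2 / α ^ 2 := by
      rw [norm_smul, norm_inv, Real.norm_eq_abs, mul_pow, inv_pow, sq_abs, inv_mul_eq_div]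
    rw [← hw]
    exact two_inner_prox_sub_add_le hlam hγ (hγt' τ hτ.1.le) (strongConvexOn_iff_convex.2 hconv)
      hxstar (Metric.mem_closedBall_self hδ.le) hP hPs
  have hV : ContinuousOn (fun τ => ‖y τ - xstar‖ ^ 2) (Icc 0 t) := fun τ hτ =>
    (((hy τ hτ.1).continuousAt.sub continuousAt_const).norm.pow 2).continuousWithinAt
  have hg : ContinuousOn (fun τ => c⁻¹ * (‖r τ‖ ^ 2 / α ^ 2)) (Icc 0 t) :=
    continuousOn_const.mul (((hr.mono Icc_subset_Ici_self).norm.pow 2).div_const _)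
  have hbound := le_exp_mul_add_integral_of_hasDerivAt_le ht hV
    (fun τ hτ => ((hy τ hτ.1.le).sub_const xstar).norm_sq) hg hdrift
  simpa only [sub_zero, mul_assoc, intervalIntegral.integral_const_mul] using hbound

/-- Proposition 2: convergence of the perturbed proximal ODE.
`P_s(x)` is given as a function `p` together with the property that `p s x` is the
(unique, by strong convexity) minimizer over the closed ball `B̄(x*, δ)` of
`y ↦ f(y) + ‖y − x‖²/(2s)`. -/
theorem stmt4 {d : ℕ}
    (f : EuclideanSpace ℝ (Fin d) → ℝ) (xstar : EuclideanSpace ℝ (Fin d))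
    (a L κ β : ℝ) (hf : ContDiff ℝ 1 f) (ha : 0 < a) (hL : 0 < L)
    (hgrad : ∀ x, ‖gradient f x‖ ≤ L * (1 + ‖x‖ ^ a))
    (hκ : 0 < κ) (hβ : 1 ≤ β)
    (hgrowth : ∀ x, f xstar + κ / 2 * ‖x - xstar‖ ^ β ≤ f x)
    (hmin : ∀ x, x ≠ xstar → f xstar < f x)
    (δ lam : ℝ) (hδ : 0 < δ) (hlam : 0 < lam)
    -- `f` is `λ`-strongly convex on the closed ball `B̄(x*, δ)`
    (hconv : ConvexOn ℝ (Metric.closedBall xstar δ) (fun y => f y - lam / 2 * ‖y‖ ^ 2))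
    -- the proximal-type operator `P_s(x)`
    (p : ℝ → EuclideanSpace ℝ (Fin d) → EuclideanSpace ℝ (Fin d))
    (hp : ∀ s : ℝ, 0 < s → ∀ x, p s x ∈ Metric.closedBall xstar δ ∧
      ∀ y ∈ Metric.closedBall xstar δ,
        f (p s x) + ‖p s x - x‖ ^ 2 / (2 * s) ≤ f y + ‖y - x‖ ^ 2 / (2 * s))
    (γ : ℝ) (hγ : 0 < γ)
    (γt : ℝ → ℝ) (hγt : Continuous γt) (hγt' : ∀ t : ℝ, 0 ≤ t → γ / 2 ≤ γt t)
    (r : ℝ → EuclideanSpace ℝ (Fin d)) (hr : ContinuousOn r (Set.Ici 0))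
    (α : ℝ) (hα : 0 < α)
    (y : ℝ → EuclideanSpace ℝ (Fin d))
    (hy : ∀ t : ℝ, 0 ≤ t → HasDerivAt y (p (γt t) (y t) - y t + α⁻¹ • r t) t) :
    ∀ t : ℝ, 0 ≤ t →
      ‖y t - xstar‖ ^ 2
        ≤ Real.exp (-(1 + 2 / (lam * γ))⁻¹ * t) * ‖y 0 - xstar‖ ^ 2
          + ((1 + 2 / (lam * γ))⁻¹)⁻¹
            * ∫ s in (0:ℝ)..t, ‖r s‖ ^ 2 / α ^ 2
                * Real.exp (-(1 + 2 / (lam * γ))⁻¹ * (t - s)) :=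
  stmt4_general f xstar hmin δ lam hδ hlam hconv p hp γ hγ γt hγt' r hr α y hy
end

section
/- Let Assumptions 1 and 2 hold. Let K > 0, let γ > 2K/(δ^{β−1} κ), and let x ∈ B(x*, K). Then the function y ↦ f(y) + ‖y − x‖²/(2γ) attains its global minimum over ℝ^d at a unique point p, and moreover p ∈ B(x*, δ). -/
open MeasureTheory Real Set

/-!
The proximal objective `g y = f y + ‖y - x‖² / (2γ)` is continuous and coercive, so it attains
its minimum. If `r` is a minimizer, comparing `g r ≤ g x*` with the growth condition gives
`γ κ ‖r - x*‖^β ≤ ‖x* - x‖² - ‖r - x‖² ≤ 2 K ‖r - x*‖`, which is impossible for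
`‖r - x*‖ ≥ δ` because `γ δ^(β-1) κ > 2K`. Hence all minimizers lie in `B(x*, δ)`, where `f` is
`λ`-strongly convex, so `g` is strictly convex there and has at most one minimizer.
-/

open Filter

theorem exists_isMinOn_add_sq_norm_sub_div {E : Type*} [NormedAddCommGroup E] [ProperSpace E]
    {f : E → ℝ} (hf : Continuous f) {m : ℝ} (hm : ∀ y, m ≤ f y) {c : ℝ} (hc : 0 < c) (x : E) :
    ∃ p, IsMinOn (fun y => f y + ‖y - x‖ ^ 2 / c) univ p := by
  have hcoercive : Tendsto (fun y => ‖y - x‖ ^ 2 / c) (cocompact E) atTop := by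
    simpa only [Function.comp_def, dist_eq_norm] using
      ((tendsto_pow_atTop two_ne_zero).comp
        (tendsto_dist_right_cocompact_atTop x)).atTop_div_const hc
  obtain ⟨p, hp⟩ := (hf.add (by fun_prop)).exists_forall_le' x
    ((tendsto_atTop_add_left_of_le _ m hm hcoercive).eventually_ge_atTop _)
  exact ⟨p, fun y _ => hp y⟩

theorem Real.rpow_sub_one_mul_le_rpow {δ t β : ℝ} (hδ : 0 < δ) (hδt : δ ≤ t) (hβ : 1 ≤ β) :
    δ ^ (β - 1) * t ≤ t ^ β := by
  have ht : 0 < t := hδ.trans_le hδt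
  calc δ ^ (β - 1) * t ≤ t ^ (β - 1) * t := by gcongr
    _ = t ^ β := by rw [Real.rpow_sub_one ht.ne', div_mul_cancel₀ _ ht.ne']

theorem sq_norm_sub_sub_sq_norm_sub_le {E : Type*} [SeminormedAddCommGroup E] (a b x : E) :
    ‖a - x‖ ^ 2 - ‖b - x‖ ^ 2 ≤ 2 * ‖a - x‖ * ‖a - b‖ := by
  have htri : ‖a - x‖ - ‖b - x‖ ≤ ‖a - b‖ := by
    simpa using norm_sub_norm_le (a - x) (b - x)
  rcases le_total ‖a - x‖ ‖b - x‖ with h | h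
  · nlinarith [norm_nonneg (a - x), norm_nonneg (a - b)]
  · nlinarith [mul_le_mul_of_nonneg_right htri
      (add_nonneg (norm_nonneg (a - x)) (norm_nonneg (b - x)))]

theorem convexOn_sq_norm_sub_div {E : Type*} [NormedAddCommGroup E] [NormedSpace ℝ E]
    {s : Set E} (hs : Convex ℝ s) (x : E) {c : ℝ} (hc : 0 ≤ c) :
    ConvexOn ℝ s (fun y => ‖y - x‖ ^ 2 / c) := by
  have := ((convexOn_dist x hs).pow (fun _ _ => dist_nonneg) 2).smul (inv_nonneg.2 hc)
  simp only [Pi.pow_apply, smul_eq_mul, dist_eq_norm] at this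
  simpa only [div_eq_inv_mul] using this

theorem norm_sub_lt_of_growth_of_prox_le {E : Type*} [SeminormedAddCommGroup E] {f : E → ℝ}
    {xstar x r : E} {κ β δ K γ : ℝ}
    (hgrowth : f xstar + κ / 2 * ‖r - xstar‖ ^ β ≤ f r)
    (hle : f r + ‖r - x‖ ^ 2 / (2 * γ) ≤ f xstar + ‖xstar - x‖ ^ 2 / (2 * γ))
    (hκ : 0 < κ) (hβ : 1 ≤ β) (hδ : 0 < δ) (hγ : 0 < γ) (hx : ‖xstar - x‖ ≤ K)
    (hK : 2 * K < γ * (δ ^ (β - 1) * κ)) :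
    ‖r - xstar‖ < δ := by
  by_contra! hr
  set t := ‖r - xstar‖
  have ht : 0 < t := hδ.trans_le hr
  have hdecrease : γ * κ * t ^ β ≤ ‖xstar - x‖ ^ 2 - ‖r - x‖ ^ 2 := by
    have h : κ / 2 * t ^ β ≤ (‖xstar - x‖ ^ 2 - ‖r - x‖ ^ 2) / (2 * γ) := by
      rw [sub_div]; linarith
    rw [le_div_iff₀ (by positivity)] at h
    linarith
  have hlip : ‖xstar - x‖ ^ 2 - ‖r - x‖ ^ 2 ≤ 2 * K * t := by
    calc ‖xstar - x‖ ^ 2 - ‖r - x‖ ^ 2 ≤ 2 * ‖xstar - x‖ * ‖xstar - r‖ :=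
          sq_norm_sub_sub_sq_norm_sub_le _ _ _
      _ ≤ 2 * K * t := by rw [norm_sub_rev xstar r]; gcongr
  have hpow := mul_le_mul_of_nonneg_left (Real.rpow_sub_one_mul_le_rpow hδ hr hβ)
    (mul_pos hγ hκ).le
  linarith [mul_lt_mul_of_pos_right hK ht]

theorem stmt6_general {d : ℕ}
    (f : EuclideanSpace ℝ (Fin d) → ℝ) (xstar : EuclideanSpace ℝ (Fin d))
    (κ β : ℝ) (hf : ContDiff ℝ 1 f)
    (hκ : 0 < κ) (hβ : 1 ≤ β)
    (hgrowth : ∀ x, f xstar + κ / 2 * ‖x - xstar‖ ^ β ≤ f x)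
    (δ lam : ℝ) (hδ : 0 < δ) (hlam : 0 < lam)
    (hconv : ConvexOn ℝ (Metric.ball xstar δ) (fun y => f y - lam / 2 * ‖y‖ ^ 2))
    (K γ : ℝ) (hK : 0 < K) (hγ : 2 * K / (δ ^ (β - 1) * κ) < γ)
    (x : EuclideanSpace ℝ (Fin d)) (hx : x ∈ Metric.ball xstar K) :
    ∃ p : EuclideanSpace ℝ (Fin d),
      p ∈ Metric.ball xstar δ ∧
      IsMinOn (fun y => f y + ‖y - x‖ ^ 2 / (2 * γ)) Set.univ p ∧
      ∀ q : EuclideanSpace ℝ (Fin d),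
        IsMinOn (fun y => f y + ‖y - x‖ ^ 2 / (2 * γ)) Set.univ q → q = p := by
  have hκδ : 0 < δ ^ (β - 1) * κ := mul_pos (Real.rpow_pos_of_pos hδ _) hκ
  have hγ₀ : 0 < γ := (div_pos (by positivity) hκδ).trans hγ
  have hK' : 2 * K < γ * (δ ^ (β - 1) * κ) := (div_lt_iff₀ hκδ).mp hγ
  have hbdd : ∀ y, f xstar ≤ f y := fun y =>
    (le_add_of_nonneg_right (by positivity)).trans (hgrowth y)
  obtain ⟨p, hp⟩ :=
    exists_isMinOn_add_sq_norm_sub_div hf.continuous hbdd (c := 2 * γ) (by positivity) x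
  have hball : ∀ r, IsMinOn (fun y => f y + ‖y - x‖ ^ 2 / (2 * γ)) univ r →
      r ∈ Metric.ball xstar δ := fun r hr =>
    mem_ball_iff_norm.2 <| norm_sub_lt_of_growth_of_prox_le (hgrowth r) (hr (mem_univ xstar))
      hκ hβ hδ hγ₀ (mem_ball_iff_norm'.1 hx).le hK'
  have hstrict : StrictConvexOn ℝ (Metric.ball xstar δ)
      (fun y => f y + ‖y - x‖ ^ 2 / (2 * γ)) :=
    ((strongConvexOn_iff_convex.2 hconv).strictConvexOn hlam).add_convexOn
      (convexOn_sq_norm_sub_div (convex_ball xstar δ) x (by positivity))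
  exact ⟨p, hball p hp, hp, fun q hq => hstrict.eq_of_isMinOn (hq.on_subset (subset_univ _))
    (hp.on_subset (subset_univ _)) (hball q hq) (hball p hp)⟩

/-- Lemma 2: well-posedness of the proximal operator. For `K > 0`,
`γ > 2K/(δ^{β−1}κ)` and `x ∈ B(x*, K)`, the function `y ↦ f(y) + ‖y − x‖²/(2γ)` attains
its global minimum over `ℝ^d` at a unique point `p`, and `p ∈ B(x*, δ)`. -/
theorem stmt6 {d : ℕ}
    (f : EuclideanSpace ℝ (Fin d) → ℝ) (xstar : EuclideanSpace ℝ (Fin d))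
    (a L κ β : ℝ) (hf : ContDiff ℝ 1 f) (ha : 0 < a) (hL : 0 < L)
    (hgrad : ∀ x, ‖gradient f x‖ ≤ L * (1 + ‖x‖ ^ a))
    (hκ : 0 < κ) (hβ : 1 ≤ β)
    (hgrowth : ∀ x, f xstar + κ / 2 * ‖x - xstar‖ ^ β ≤ f x)
    (hmin : ∀ x, x ≠ xstar → f xstar < f x)
    (hf3 : ContDiff ℝ 3 f) (δ lam : ℝ) (hδ : 0 < δ) (hlam : 0 < lam)
    (hconv : ConvexOn ℝ (Metric.ball xstar δ) (fun y => f y - lam / 2 * ‖y‖ ^ 2))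
    (K γ : ℝ) (hK : 0 < K) (hγ : 2 * K / (δ ^ (β - 1) * κ) < γ)
    (x : EuclideanSpace ℝ (Fin d)) (hx : x ∈ Metric.ball xstar K) :
    ∃ p : EuclideanSpace ℝ (Fin d),
      p ∈ Metric.ball xstar δ ∧
      IsMinOn (fun y => f y + ‖y - x‖ ^ 2 / (2 * γ)) Set.univ p ∧
      ∀ q : EuclideanSpace ℝ (Fin d),
        IsMinOn (fun y => f y + ‖y - x‖ ^ 2 / (2 * γ)) Set.univ q → q = p :=
  stmt6_general f xstar κ β hf hκ hβ hgrowth δ lam hδ hlam hconv K γ hK hγ x hx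
end

section
/- Let Assumption 1 hold and let α > 0. Define h0(x) := x e^{−α f(x)} and h1(x) := e^{−α f(x)}. Then the suprema L_{0,α} := e^{−α f(x*)} · sup_{x ∈ ℝ^d} e^{−(κα/2)‖x − x*‖^β} (1 + αL‖x‖ + αL‖x‖^{a+1}) and L_{1,α} := e^{−α f(x*)} · sup_{x ∈ ℝ^d} e^{−(κα/2)‖x − x*‖^β} αL(1 + ‖x‖^a) are finite, and for all x, y ∈ ℝ^d: ‖h0(x) − h0(y)‖ ≤ L_{0,α} ‖x − y‖ and |h1(x) − h1(y)| ≤ L_{1,α} ‖x − y‖. -/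
/-!
The growth condition gives `e^{-α f x} ≤ e^{-α f x*} e^{-(κα/2)‖x - x*‖^β}`. The derivatives of
`h1` and `h0` are `e^{-α f x} (-α ∇f x)` and `e^{-α f x} (I + x ⊗ (-α ∇f x))`, so with the gradient
bound their norms are at most `e^{-α f x*}` times the functions whose suprema define `L_{1,α}` and
`L_{0,α}`, and the mean value inequality gives the Lipschitz bounds. The suprema are finite since
for `β ≥ 1` the factor `e^{-c‖x - x*‖^β}` decays faster than any power of `‖x‖`.
-/

open MeasureTheory Real Set

open Filter in
lemma Real.exists_exp_neg_mul_mul_rpow_le {c p : ℝ} (hc : 0 < c) (hp : 0 ≤ p) :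
    ∃ M, ∀ t, 0 ≤ t → exp (-c * t) * t ^ p ≤ M := by
  obtain ⟨T, hT⟩ := eventually_atTop.1
    ((tendsto_rpow_mul_exp_neg_mul_atTop_nhds_zero p c hc).eventually (ge_mem_nhds one_pos))
  refine ⟨max 1 (T ^ p), fun t ht => ?_⟩
  rcases le_total T t with hTt | htT
  · exact (mul_comm (exp _) _ ▸ hT t hTt).trans (le_max_left _ _)
  · calc exp (-c * t) * t ^ p ≤ 1 * T ^ p := by
          gcongr; exact exp_le_one_iff.2 (by nlinarith)
      _ ≤ max 1 (T ^ p) := by rw [one_mul]; exact le_max_right _ _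

lemma bddAbove_range_exp_neg_mul_norm_sub_rpow_mul_norm_rpow {E : Type*}
    [SeminormedAddCommGroup E] {c β p : ℝ} (hc : 0 < c) (hβ : 1 ≤ β) (hp : 0 ≤ p) (x₀ : E) :
    BddAbove (range fun x : E => exp (-c * ‖x - x₀‖ ^ β) * ‖x‖ ^ p) := by
  obtain ⟨M, hM⟩ := exists_exp_neg_mul_mul_rpow_le hc hp
  refine ⟨exp c * (1 + ‖x₀‖) ^ p * M, forall_mem_range.2 fun x => ?_⟩
  set t := ‖x - x₀‖
  set m := max 1 t
  have hm : 1 ≤ m := le_max_left _ _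
  -- `m - 1 ≤ t ^ β` and `‖x‖ ≤ (1 + ‖x₀‖) * m` reduce the claim to the one-variable bound at `m`
  have hexp : m - 1 ≤ t ^ β := by
    rcases le_total t 1 with h | h
    · simp only [m, max_eq_left h, sub_self]; positivity
    · have : t ≤ t ^ β := by simpa using rpow_le_rpow_of_exponent_le h hβ
      simp only [m, max_eq_right h]; linarith
  have hnorm : ‖x‖ ≤ (1 + ‖x₀‖) * m := by
    calc ‖x‖ ≤ t + ‖x₀‖ := norm_le_norm_sub_add x x₀
      _ ≤ (1 + ‖x₀‖) * m := by nlinarith [le_max_right 1 t, norm_nonneg x₀]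
  calc exp (-c * t ^ β) * ‖x‖ ^ p
      ≤ exp (c + -c * m) * ((1 + ‖x₀‖) * m) ^ p := by
        gcongr; nlinarith
    _ = exp c * (1 + ‖x₀‖) ^ p * (exp (-c * m) * m ^ p) := by
        rw [exp_add, mul_rpow (by positivity) (by positivity)]; ring
    _ ≤ exp c * (1 + ‖x₀‖) ^ p * M := by gcongr; exact hM m (by linarith)

lemma exp_neg_mul_le_of_add_rpow_le {E : Type*} [SeminormedAddCommGroup E] {f : E → ℝ}
    {x x₀ : E} {α κ β : ℝ} (hα : 0 ≤ α) (hgrowth : f x₀ + κ / 2 * ‖x - x₀‖ ^ β ≤ f x) :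
    exp (-α * f x) ≤ exp (-α * f x₀) * exp (-(κ * α / 2) * ‖x - x₀‖ ^ β) := by
  rw [← exp_add, exp_le_exp]
  nlinarith [mul_le_mul_of_nonneg_left hgrowth hα]

section

variable {E F : Type*} [NormedAddCommGroup E] [NormedSpace ℝ E] [NormedAddCommGroup F]
  [NormedSpace ℝ F]

lemma norm_sub_le_mul_iSup_mul_norm_sub {h : E → F} {h' : E → E →L[ℝ] F} {φ : E → ℝ} {C : ℝ}
    (hC : 0 ≤ C) (hh : ∀ x, HasFDerivAt h (h' x) x) (hbound : ∀ x, ‖h' x‖ ≤ C * φ x)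
    (hφ : BddAbove (range φ)) (x y : E) :
    ‖h x - h y‖ ≤ (C * ⨆ z, φ z) * ‖x - y‖ :=
  convex_univ.norm_image_sub_le_of_norm_hasFDerivWithin_le (fun z _ => (hh z).hasFDerivWithinAt)
    (fun z _ => (hbound z).trans (mul_le_mul_of_nonneg_left (le_ciSup hφ z) hC))
    (mem_univ y) (mem_univ x)

variable {f : E → ℝ} {f' : E →L[ℝ] ℝ} {x x₀ : E} {α κ β L a : ℝ}

lemma norm_exp_neg_mul_smul_neg_smul_le (hα : 0 ≤ α)
    (hgrowth : f x₀ + κ / 2 * ‖x - x₀‖ ^ β ≤ f x) (hf' : ‖f'‖ ≤ L * (1 + ‖x‖ ^ a)) :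
    ‖exp (-α * f x) • (-α) • f'‖
      ≤ exp (-α * f x₀) * (exp (-(κ * α / 2) * ‖x - x₀‖ ^ β) * (α * L * (1 + ‖x‖ ^ a))) := by
  rw [norm_smul, norm_smul, norm_neg, norm_of_nonneg (exp_pos _).le, norm_of_nonneg hα]
  calc exp (-α * f x) * (α * ‖f'‖)
      ≤ exp (-α * f x₀) * exp (-(κ * α / 2) * ‖x - x₀‖ ^ β) * (α * (L * (1 + ‖x‖ ^ a))) := by
        gcongr; exact exp_neg_mul_le_of_add_rpow_le hα hgrowth
    _ = _ := by ring

lemma norm_exp_neg_mul_smul_id_add_smulRight_le (hα : 0 ≤ α)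
    (hgrowth : f x₀ + κ / 2 * ‖x - x₀‖ ^ β ≤ f x) (hf' : ‖f'‖ ≤ L * (1 + ‖x‖ ^ a)) :
    ‖exp (-α * f x) • ContinuousLinearMap.id ℝ E + (exp (-α * f x) • (-α) • f').smulRight x‖
      ≤ exp (-α * f x₀) * (exp (-(κ * α / 2) * ‖x - x₀‖ ^ β)
          * (1 + α * L * ‖x‖ + α * L * ‖x‖ ^ (a + 1))) := by
  have hL : 0 ≤ L := nonneg_of_mul_nonneg_left ((norm_nonneg _).trans hf') (by positivity)
  have hpow : ‖x‖ ^ a * ‖x‖ ≤ ‖x‖ ^ (a + 1) := by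
    rcases eq_or_ne ‖x‖ 0 with h | h
    · rw [h, mul_zero]; positivity
    · rw [rpow_add_one h]
  have hf'x : ‖f'‖ * ‖x‖ ≤ L * ‖x‖ + L * ‖x‖ ^ (a + 1) := by
    calc ‖f'‖ * ‖x‖ ≤ L * (1 + ‖x‖ ^ a) * ‖x‖ := by gcongr
      _ = L * ‖x‖ + L * (‖x‖ ^ a * ‖x‖) := by ring
      _ ≤ L * ‖x‖ + L * ‖x‖ ^ (a + 1) := by gcongr
  have hw : 0 ≤ exp (-α * f x) := (exp_pos _).le
  calc _ ≤ ‖exp (-α * f x) • ContinuousLinearMap.id ℝ E‖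
          + ‖exp (-α * f x) • (-α) • f'‖ * ‖x‖ := by
        rw [← ContinuousLinearMap.norm_smulRight_apply]; exact norm_add_le _ _
    _ ≤ exp (-α * f x) * 1 + exp (-α * f x) * (α * ‖f'‖) * ‖x‖ := by
        rw [norm_smul, norm_smul, norm_smul, norm_neg, norm_of_nonneg hw, norm_of_nonneg hα]
        gcongr; exact ContinuousLinearMap.norm_id_le
    _ = exp (-α * f x) * (1 + α * (‖f'‖ * ‖x‖)) := by ring
    _ ≤ exp (-α * f x₀) * exp (-(κ * α / 2) * ‖x - x₀‖ ^ β)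
          * (1 + α * (L * ‖x‖ + L * ‖x‖ ^ (a + 1))) := by
        gcongr; exact exp_neg_mul_le_of_add_rpow_le hα hgrowth
    _ = _ := by ring

end

theorem stmt8_general {d : ℕ}
    (f : EuclideanSpace ℝ (Fin d) → ℝ) (xstar : EuclideanSpace ℝ (Fin d))
    (a L κ β : ℝ) (hf : ContDiff ℝ 1 f) (ha : 0 < a) (hL : 0 < L)
    (hgrad : ∀ x, ‖gradient f x‖ ≤ L * (1 + ‖x‖ ^ a))
    (hκ : 0 < κ) (hβ : 1 ≤ β)
    (hgrowth : ∀ x, f xstar + κ / 2 * ‖x - xstar‖ ^ β ≤ f x)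
    (α : ℝ) (hα : 0 < α) :
    BddAbove (Set.range fun x : EuclideanSpace ℝ (Fin d) =>
      Real.exp (-(κ * α / 2) * ‖x - xstar‖ ^ β) * (1 + α * L * ‖x‖ + α * L * ‖x‖ ^ (a + 1))) ∧
    BddAbove (Set.range fun x : EuclideanSpace ℝ (Fin d) =>
      Real.exp (-(κ * α / 2) * ‖x - xstar‖ ^ β) * (α * L * (1 + ‖x‖ ^ a))) ∧
    (∀ x y : EuclideanSpace ℝ (Fin d),
      ‖Real.exp (-α * f x) • x - Real.exp (-α * f y) • y‖
        ≤ (Real.exp (-α * f xstar) * ⨆ z : EuclideanSpace ℝ (Fin d),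
            Real.exp (-(κ * α / 2) * ‖z - xstar‖ ^ β)
              * (1 + α * L * ‖z‖ + α * L * ‖z‖ ^ (a + 1))) * ‖x - y‖) ∧
    (∀ x y : EuclideanSpace ℝ (Fin d),
      |Real.exp (-α * f x) - Real.exp (-α * f y)|
        ≤ (Real.exp (-α * f xstar) * ⨆ z : EuclideanSpace ℝ (Fin d),
            Real.exp (-(κ * α / 2) * ‖z - xstar‖ ^ β) * (α * L * (1 + ‖z‖ ^ a))) * ‖x - y‖) := by
  have hbdd (p : ℝ) (hp : 0 ≤ p) := bddAbove_range_exp_neg_mul_norm_sub_rpow_mul_norm_rpow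
    (by positivity : 0 < κ * α / 2) hβ hp xstar
  have hmul := monotone_mul_left_of_nonneg (by positivity : 0 ≤ α * L)
  have hB₀ : BddAbove (range fun x : EuclideanSpace ℝ (Fin d) =>
      exp (-(κ * α / 2) * ‖x - xstar‖ ^ β) * (1 + α * L * ‖x‖ + α * L * ‖x‖ ^ (a + 1))) :=
    (((hbdd 0 le_rfl).range_add ((hbdd 1 zero_le_one).range_comp_left hmul)).range_add
    ((hbdd (a + 1) (by positivity)).range_comp_left hmul)).range_mono _ fun x => le_of_eq
      (by simp only [rpow_zero, rpow_one]; ring)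
  have hB₁ : BddAbove (range fun x : EuclideanSpace ℝ (Fin d) =>
      exp (-(κ * α / 2) * ‖x - xstar‖ ^ β) * (α * L * (1 + ‖x‖ ^ a))) :=
    (((hbdd 0 le_rfl).range_add (hbdd a ha.le)).range_comp_left hmul).range_mono _ fun x =>
      le_of_eq (by simp only [rpow_zero]; ring)
  have hdf (x) : ‖fderiv ℝ f x‖ ≤ L * (1 + ‖x‖ ^ a) := by
    simpa only [← (InnerProductSpace.toDual ℝ _).norm_map, toDual_gradient] using hgrad x
  have hw (x) : HasFDerivAt (fun y => exp (-α * f y)) (exp (-α * f x) • (-α) • fderiv ℝ f x) x :=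
    (((hf.differentiable one_ne_zero x).hasFDerivAt).const_mul (-α)).exp
  refine ⟨hB₀, hB₁, norm_sub_le_mul_iSup_mul_norm_sub (exp_pos _).le
    (fun x => (hw x).smul (hasFDerivAt_id x))
    (fun x => norm_exp_neg_mul_smul_id_add_smulRight_le hα.le (hgrowth x) (hdf x)) hB₀,
    fun x y => ?_⟩
  rw [← Real.norm_eq_abs]
  exact norm_sub_le_mul_iSup_mul_norm_sub (exp_pos _).le hw
    (fun x => norm_exp_neg_mul_smul_neg_smul_le hα.le (hgrowth x) (hdf x)) hB₁ x y

/-- Lemma 1, first claims: the suprema defining `L_{0,α}` and `L_{1,α}`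
are finite, and `h0 : x ↦ x e^{−αf(x)}` and `h1 : x ↦ e^{−αf(x)}` are Lipschitz with these
constants. -/
theorem stmt8 {d : ℕ}
    (f : EuclideanSpace ℝ (Fin d) → ℝ) (xstar : EuclideanSpace ℝ (Fin d))
    (a L κ β : ℝ) (hf : ContDiff ℝ 1 f) (ha : 0 < a) (hL : 0 < L)
    (hgrad : ∀ x, ‖gradient f x‖ ≤ L * (1 + ‖x‖ ^ a))
    (hκ : 0 < κ) (hβ : 1 ≤ β)
    (hgrowth : ∀ x, f xstar + κ / 2 * ‖x - xstar‖ ^ β ≤ f x)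
    (hmin : ∀ x, x ≠ xstar → f xstar < f x)
    (α : ℝ) (hα : 0 < α) :
    BddAbove (Set.range fun x : EuclideanSpace ℝ (Fin d) =>
      Real.exp (-(κ * α / 2) * ‖x - xstar‖ ^ β) * (1 + α * L * ‖x‖ + α * L * ‖x‖ ^ (a + 1))) ∧
    BddAbove (Set.range fun x : EuclideanSpace ℝ (Fin d) =>
      Real.exp (-(κ * α / 2) * ‖x - xstar‖ ^ β) * (α * L * (1 + ‖x‖ ^ a))) ∧
    (∀ x y : EuclideanSpace ℝ (Fin d),
      ‖Real.exp (-α * f x) • x - Real.exp (-α * f y) • y‖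
        ≤ (Real.exp (-α * f xstar) * ⨆ z : EuclideanSpace ℝ (Fin d),
            Real.exp (-(κ * α / 2) * ‖z - xstar‖ ^ β)
              * (1 + α * L * ‖z‖ + α * L * ‖z‖ ^ (a + 1))) * ‖x - y‖) ∧
    (∀ x y : EuclideanSpace ℝ (Fin d),
      |Real.exp (-α * f x) - Real.exp (-α * f y)|
        ≤ (Real.exp (-α * f xstar) * ⨆ z : EuclideanSpace ℝ (Fin d),
            Real.exp (-(κ * α / 2) * ‖z - xstar‖ ^ β) * (α * L * (1 + ‖z‖ ^ a))) * ‖x - y‖) :=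
  stmt8_general f xstar a L κ β hf ha hL hgrad hκ hβ hgrowth α hα
end

section
/- Let Assumption 1 hold and let α > 0. Let μ, μ' be probability measures on ℝ^d with finite first moments. Then for every coupling π of μ and μ' (i.e. a probability measure on ℝ^d × ℝ^d with marginals μ and μ'): ‖θ_α(μ) − θ_α(μ')‖ ≤ (∫ ‖x − y‖ dπ(x,y)) · (L_{0,α} + ‖θ_α(μ')‖·L_{1,α}) / (∫ e^{−α f(x)} dμ(x)). In particular, taking the infimum over couplings, ‖θ_α(μ) − θ_α(μ')‖ is bounded by the Wasserstein-1 distance between μ and μ' times (L_{0,α} + ‖θ_α(μ')‖ L_{1,α})/∫ e^{−α f} dμ. -/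
/-!
With `w = exp (-α f)` and `g x = w x • x` we have `θ_α(ρ) = ∫ g dρ / ∫ w dρ`, and for a coupling `γ`
of `μ` and `μ'`, with `Z = ∫ w dμ`,
`Z • (θ_α(μ) - θ_α(μ')) = ∫ (g x - g y + (w y - w x) • θ_α(μ')) dγ(x, y)`.
The growth condition gives `w x ≤ exp (-α f x*) exp (-(κα/2) ‖x - x*‖^β)`, a decay that beats the
polynomial growth of `∇f`; hence `‖Dg‖ ≤ L_{0,α}` and `‖Dw‖ ≤ L_{1,α}`, so by the mean value
theorem `g` and `w` are Lipschitz with these constants, and integrating the pointwise bound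
against `γ` gives the estimate.
-/

open MeasureTheory Real Set

section WeightedMean

variable {E : Type*} [NormedAddCommGroup E] [NormedSpace ℝ E] [MeasurableSpace E]

noncomputable def weightedMean (w : E → ℝ) (ρ : Measure E) : E :=
  (∫ y, w y ∂ρ)⁻¹ • ∫ y, w y • y ∂ρ

theorem thetaAlpha_eq_weightedMean {d : ℕ} (α : ℝ) (f : EuclideanSpace ℝ (Fin d) → ℝ)
    (ρ : Measure (EuclideanSpace ℝ (Fin d))) :
    thetaAlpha α f ρ = weightedMean (fun y => exp (-α * f y)) ρ :=
  rfl

variable {w : E → ℝ} {μ μ' : Measure E} {γ : Measure (E × E)}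

theorem integral_smul_weightedMean (h : ∫ y, w y ∂μ ≠ 0) :
    (∫ y, w y ∂μ) • weightedMean w μ = ∫ y, w y • y ∂μ :=
  smul_inv_smul₀ h _

variable [CompleteSpace E]

theorem weightedMean_sub_weightedMean_eq_integral (hγ₁ : γ.map Prod.fst = μ)
    (hγ₂ : γ.map Prod.snd = μ') (hw : Integrable w μ) (hw' : Integrable w μ')
    (hg : Integrable (fun y => w y • y) μ) (hg' : Integrable (fun y => w y • y) μ')
    (hZ : ∫ y, w y ∂μ ≠ 0) (hZ' : ∫ y, w y ∂μ' ≠ 0) :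
    weightedMean w μ - weightedMean w μ' = (∫ y, w y ∂μ)⁻¹ •
      ∫ p, (w p.1 • p.1 - w p.2 • p.2 + (w p.2 - w p.1) • weightedMean w μ') ∂γ := by
  subst hγ₁ hγ₂
  have hw₁ : Integrable (fun p : E × E => w p.1) γ := hw.comp_measurable measurable_fst
  have hw₂ : Integrable (fun p : E × E => w p.2) γ := hw'.comp_measurable measurable_snd
  have hg₁ : Integrable (fun p : E × E => w p.1 • p.1) γ := hg.comp_measurable measurable_fst
  have hg₂ : Integrable (fun p : E × E => w p.2 • p.2) γ := hg'.comp_measurable measurable_snd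
  have hG₁ : Integrable (fun p : E × E => w p.1 • p.1 - w p.2 • p.2) γ := hg₁.sub hg₂
  have hG₂ : Integrable (fun p : E × E => (w p.2 - w p.1) • weightedMean w (γ.map Prod.snd)) γ :=
    (hw₂.sub hw₁).smul_const _
  rw [eq_inv_smul_iff₀ hZ, integral_add hG₁ hG₂, integral_sub hg₁ hg₂, integral_smul_const,
    integral_sub hw₂ hw₁,
    ← integral_map measurable_fst.aemeasurable hw.aestronglyMeasurable,
    ← integral_map measurable_snd.aemeasurable hw'.aestronglyMeasurable,
    ← integral_map measurable_fst.aemeasurable hg.aestronglyMeasurable,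
    ← integral_map measurable_snd.aemeasurable hg'.aestronglyMeasurable,
    smul_sub, integral_smul_weightedMean hZ, ← integral_smul_weightedMean hZ', sub_smul]
  abel

theorem norm_weightedMean_sub_le {C₀ C₁ : ℝ} (hγ₁ : γ.map Prod.fst = μ)
    (hγ₂ : γ.map Prod.snd = μ') (hw : Integrable w μ) (hw' : Integrable w μ')
    (hg : Integrable (fun y => w y • y) μ) (hg' : Integrable (fun y => w y • y) μ')
    (hZ : 0 < ∫ y, w y ∂μ) (hZ' : ∫ y, w y ∂μ' ≠ 0)
    (hd : Integrable (fun p : E × E => ‖p.1 - p.2‖) γ)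
    (hg_lip : ∀ x y, ‖w x • x - w y • y‖ ≤ C₀ * ‖x - y‖)
    (hw_lip : ∀ x y, |w x - w y| ≤ C₁ * ‖x - y‖) :
    ‖weightedMean w μ - weightedMean w μ'‖
      ≤ (∫ p, ‖p.1 - p.2‖ ∂γ) * (C₀ + ‖weightedMean w μ'‖ * C₁) / ∫ y, w y ∂μ := by
  set θ' := weightedMean w μ'
  have hG (p : E × E) : ‖w p.1 • p.1 - w p.2 • p.2 + (w p.2 - w p.1) • θ'‖
      ≤ (C₀ + ‖θ'‖ * C₁) * ‖p.1 - p.2‖ := calc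
    _ ≤ ‖w p.1 • p.1 - w p.2 • p.2‖ + |w p.2 - w p.1| * ‖θ'‖ := by
      rw [← Real.norm_eq_abs, ← norm_smul]
      exact norm_add_le _ _
    _ ≤ C₀ * ‖p.1 - p.2‖ + C₁ * ‖p.1 - p.2‖ * ‖θ'‖ := by
      rw [abs_sub_comm]
      gcongr
      exacts [hg_lip _ _, hw_lip _ _]
    _ = (C₀ + ‖θ'‖ * C₁) * ‖p.1 - p.2‖ := by ring
  rw [weightedMean_sub_weightedMean_eq_integral hγ₁ hγ₂ hw hw' hg hg' hZ.ne' hZ', norm_smul,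
    norm_inv, Real.norm_of_nonneg hZ.le, inv_mul_eq_div]
  gcongr
  calc _ ≤ ∫ p, (C₀ + ‖θ'‖ * C₁) * ‖p.1 - p.2‖ ∂γ :=
        norm_integral_le_of_norm_le (hd.const_mul _) (ae_of_all _ hG)
    _ = _ := by rw [integral_const_mul, mul_comm]

end WeightedMean

theorem norm_exp_neg_mul_le {X : Type*} {f : X → ℝ} {α m : ℝ} (hα : 0 ≤ α) (hm : ∀ x, m ≤ f x)
    (x : X) : ‖exp (-α * f x)‖ ≤ exp (-α * m) := by
  rw [Real.norm_of_nonneg (exp_pos _).le, exp_le_exp]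
  nlinarith [hm x]

theorem exp_neg_mul_le_of_growth {F : Type*} [NormedAddCommGroup F] {f : F → ℝ} {xstar : F}
    {α κ β : ℝ} (hα : 0 ≤ α) (hgrowth : ∀ x, f xstar + κ / 2 * ‖x - xstar‖ ^ β ≤ f x) (x : F) :
    exp (-α * f x) ≤ exp (-α * f xstar) * exp (-(κ * α / 2) * ‖x - xstar‖ ^ β) := by
  rw [← exp_add, exp_le_exp]
  nlinarith [mul_le_mul_of_nonneg_left (hgrowth x) hα]

section GibbsWeight

variable {F : Type*} [NormedAddCommGroup F] [NormedSpace ℝ F] {f : F → ℝ} {α C : ℝ}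

theorem hasFDerivAt_exp_neg_mul {x : F} (hf : DifferentiableAt ℝ f x) :
    HasFDerivAt (fun y => exp (-α * f y)) (exp (-α * f x) • (-α) • fderiv ℝ f x) x :=
  (hf.hasFDerivAt.const_mul (-α)).exp

theorem norm_exp_neg_mul_smul_fderiv (x : F) :
    ‖exp (-α * f x) • (-α) • fderiv ℝ f x‖ = exp (-α * f x) * (|α| * ‖fderiv ℝ f x‖) := by
  rw [norm_smul, norm_smul, Real.norm_of_nonneg (exp_pos _).le, Real.norm_eq_abs, abs_neg]

theorem abs_exp_neg_mul_sub_le (hf : Differentiable ℝ f)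
    (hC : ∀ x, exp (-α * f x) * (|α| * ‖fderiv ℝ f x‖) ≤ C) (x y : F) :
    |exp (-α * f x) - exp (-α * f y)| ≤ C * ‖x - y‖ :=
  convex_univ.norm_image_sub_le_of_norm_hasFDerivWithin_le
    (fun z _ => (hasFDerivAt_exp_neg_mul (hf z)).hasFDerivWithinAt)
    (fun z _ => (norm_exp_neg_mul_smul_fderiv z).trans_le (hC z)) (mem_univ y) (mem_univ x)

theorem norm_exp_neg_mul_smul_sub_le (hf : Differentiable ℝ f)
    (hC : ∀ x, exp (-α * f x) * (1 + |α| * ‖fderiv ℝ f x‖ * ‖x‖) ≤ C) (x y : F) :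
    ‖exp (-α * f x) • x - exp (-α * f y) • y‖ ≤ C * ‖x - y‖ := by
  refine convex_univ.norm_image_sub_le_of_norm_hasFDerivWithin_le
    (f := fun y => exp (-α * f y) • y)
    (fun z _ => ((hasFDerivAt_exp_neg_mul (hf z)).smul (hasFDerivAt_id z)).hasFDerivWithinAt)
    (fun z _ => ?_) (mem_univ y) (mem_univ x)
  calc _ ≤ ‖exp (-α * f z) • ContinuousLinearMap.id ℝ F‖
        + ‖exp (-α * f z) • (-α) • fderiv ℝ f z‖ * ‖z‖ := by
        rw [← ContinuousLinearMap.norm_smulRight_apply]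
        exact norm_add_le _ _
    _ ≤ exp (-α * f z) * 1 + exp (-α * f z) * (|α| * ‖fderiv ℝ f z‖) * ‖z‖ := by
        rw [norm_exp_neg_mul_smul_fderiv, norm_smul, Real.norm_of_nonneg (exp_pos _).le]
        gcongr
        exact ContinuousLinearMap.norm_id_le
    _ ≤ C := by linarith [hC z]

variable {xstar : F} {a L κ β : ℝ}

theorem exp_neg_mul_mul_norm_fderiv_le (hα : 0 ≤ α)
    (hgrowth : ∀ x, f xstar + κ / 2 * ‖x - xstar‖ ^ β ≤ f x)
    (hgrad : ∀ x, ‖fderiv ℝ f x‖ ≤ L * (1 + ‖x‖ ^ a)) (x : F) :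
    exp (-α * f x) * (|α| * ‖fderiv ℝ f x‖)
      ≤ exp (-α * f xstar) * (exp (-(κ * α / 2) * ‖x - xstar‖ ^ β) * (α * L * (1 + ‖x‖ ^ a))) := by
  calc _ ≤ (exp (-α * f xstar) * exp (-(κ * α / 2) * ‖x - xstar‖ ^ β))
        * (α * (L * (1 + ‖x‖ ^ a))) := by
        rw [abs_of_nonneg hα]
        exact mul_le_mul (exp_neg_mul_le_of_growth hα hgrowth x)
          (mul_le_mul_of_nonneg_left (hgrad x) hα) (by positivity) (by positivity)
    _ = _ := by ring

theorem exp_neg_mul_mul_one_add_le (hα : 0 ≤ α) (ha : 0 ≤ a)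
    (hgrowth : ∀ x, f xstar + κ / 2 * ‖x - xstar‖ ^ β ≤ f x)
    (hgrad : ∀ x, ‖fderiv ℝ f x‖ ≤ L * (1 + ‖x‖ ^ a)) (x : F) :
    exp (-α * f x) * (1 + |α| * ‖fderiv ℝ f x‖ * ‖x‖)
      ≤ exp (-α * f xstar) * (exp (-(κ * α / 2) * ‖x - xstar‖ ^ β)
        * (1 + α * L * ‖x‖ + α * L * ‖x‖ ^ (a + 1))) := by
  have hx : |α| * ‖fderiv ℝ f x‖ * ‖x‖ ≤ α * L * ‖x‖ + α * L * ‖x‖ ^ (a + 1) := by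
    rw [abs_of_nonneg hα, rpow_add_one' (norm_nonneg x) (by linarith)]
    nlinarith [mul_le_mul_of_nonneg_right (mul_le_mul_of_nonneg_left (hgrad x) hα) (norm_nonneg x)]
  rw [← mul_assoc]
  exact mul_le_mul (exp_neg_mul_le_of_growth hα hgrowth x) (by linarith) (by positivity)
    (by positivity)

end GibbsWeight

theorem sub_one_le_rpow {t β : ℝ} (ht : 0 ≤ t) (hβ : 1 ≤ β) : t - 1 ≤ t ^ β := by
  rcases le_total t 1 with h | h
  · linarith [rpow_nonneg ht β]
  · calc t - 1 ≤ t ^ (1 : ℝ) := by rw [rpow_one]; linarith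
      _ ≤ t ^ β := rpow_le_rpow_of_exponent_le h hβ

theorem rpow_mul_exp_neg_mul_le {s c u : ℝ} (hs : 0 ≤ s) (hc : 0 < c) (hu : 0 ≤ u) :
    u ^ s * exp (-(c * u)) ≤ (s / c) ^ s * exp (-s) := by
  rcases hs.eq_or_lt with rfl | hs
  · simpa using exp_le_one_iff.2 (neg_nonpos.2 (mul_nonneg hc.le hu))
  -- `y ≤ exp (y - 1)` at `y = c u / s`, raised to the power `s`
  have key : (c / s) ^ s * u ^ s ≤ exp (c * u - s) := calc
    (c / s) ^ s * u ^ s = (c * u / s) ^ s := by rw [← mul_rpow (by positivity) hu]; ring_nf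
    _ ≤ exp (c * u / s - 1) ^ s := by
        gcongr
        linarith [add_one_le_exp (c * u / s - 1)]
    _ = exp (c * u - s) := by rw [← exp_mul]; congr 1; field_simp
  have hinv : (s / c) ^ s * (c / s) ^ s = 1 := by
    rw [← mul_rpow (by positivity) (by positivity), div_mul_div_cancel₀ hc.ne', div_self hs.ne',
      one_rpow]
  calc u ^ s * exp (-(c * u)) = (s / c) ^ s * ((c / s) ^ s * u ^ s) * exp (-(c * u)) := by
        rw [← mul_assoc, hinv, one_mul]
    _ ≤ (s / c) ^ s * exp (c * u - s) * exp (-(c * u)) := by gcongr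
    _ = (s / c) ^ s * exp (-s) := by rw [mul_assoc, ← exp_add]; ring_nf

section Decay

variable {E : Type*} [NormedAddCommGroup E]

theorem exp_neg_mul_norm_sub_rpow_mul_norm_rpow_le {c β s : ℝ} (hc : 0 < c) (hβ : 1 ≤ β)
    (hs : 0 ≤ s) (x₀ z : E) :
    exp (-c * ‖z - x₀‖ ^ β) * ‖z‖ ^ s ≤ exp (c * (1 + ‖x₀‖)) * ((s / c) ^ s * exp (-s)) := by
  set u := ‖z - x₀‖ + ‖x₀‖
  have hu : 0 ≤ u := by positivity
  have hexp : exp (-c * ‖z - x₀‖ ^ β) ≤ exp (c * (1 + ‖x₀‖)) * exp (-(c * u)) := by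
    rw [← exp_add, exp_le_exp]
    nlinarith [sub_one_le_rpow (norm_nonneg (z - x₀)) hβ]
  have hz : ‖z‖ ^ s ≤ u ^ s := by
    gcongr
    simpa using norm_add_le (z - x₀) x₀
  calc _ ≤ exp (c * (1 + ‖x₀‖)) * exp (-(c * u)) * u ^ s := by gcongr
    _ = exp (c * (1 + ‖x₀‖)) * (u ^ s * exp (-(c * u))) := by ring
    _ ≤ _ := mul_le_mul_of_nonneg_left (rpow_mul_exp_neg_mul_le hs hc hu) (exp_pos _).le

theorem bddAbove_range_exp_neg_mul_norm_sub_rpow_mul {c β s : ℝ} (hc : 0 < c) (hβ : 1 ≤ β)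
    (hs : 0 ≤ s) (x₀ : E) (B : ℝ) :
    BddAbove (range fun z : E => exp (-c * ‖z - x₀‖ ^ β) * (B * ‖z‖ ^ s)) := by
  refine ⟨|B| * (exp (c * (1 + ‖x₀‖)) * ((s / c) ^ s * exp (-s))), forall_mem_range.2 fun z => ?_⟩
  calc _ ≤ |B| * (exp (-c * ‖z - x₀‖ ^ β) * ‖z‖ ^ s) := by
        rw [mul_left_comm]
        gcongr
        exact le_abs_self B
    _ ≤ _ := mul_le_mul_of_nonneg_left
        (exp_neg_mul_norm_sub_rpow_mul_norm_rpow_le hc hβ hs x₀ z) (abs_nonneg B)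

end Decay

section Integrability

variable {E : Type*} [NormedAddCommGroup E] [MeasurableSpace E] [OpensMeasurableSpace E]
  {f : E → ℝ} {α m : ℝ} {ρ : Measure E}

theorem integrable_exp_neg_mul [IsFiniteMeasure ρ] (hf : Continuous f) (hα : 0 ≤ α)
    (hm : ∀ x, m ≤ f x) : Integrable (fun x => exp (-α * f x)) ρ :=
  .of_bound (by fun_prop) _ (ae_of_all _ (norm_exp_neg_mul_le hα hm))

theorem integrable_exp_neg_mul_smul_self [NormedSpace ℝ E] [SecondCountableTopology E]
    (hf : Continuous f) (hα : 0 ≤ α) (hm : ∀ x, m ≤ f x) (hρ : Integrable (fun x => ‖x‖) ρ) :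
    Integrable (fun x => exp (-α * f x) • x) ρ :=
  ((integrable_norm_iff aestronglyMeasurable_id).1 hρ).bdd_smul _ (by fun_prop)
    (ae_of_all _ (norm_exp_neg_mul_le hα hm))

theorem integrable_norm_sub_of_map_eq [SecondCountableTopology E] {μ μ' : Measure E}
    {γ : Measure (E × E)} (hγ₁ : γ.map Prod.fst = μ) (hγ₂ : γ.map Prod.snd = μ')
    (hμ : Integrable (fun x => ‖x‖) μ) (hμ' : Integrable (fun x => ‖x‖) μ') :
    Integrable (fun p : E × E => ‖p.1 - p.2‖) γ := by
  subst hγ₁ hγ₂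
  refine ((hμ.comp_measurable measurable_fst).add (hμ'.comp_measurable measurable_snd)).mono'
    (by fun_prop) (ae_of_all _ fun p => ?_)
  simpa using norm_sub_le p.1 p.2

end Integrability

theorem stmt9_general {d : ℕ}
    (f : EuclideanSpace ℝ (Fin d) → ℝ) (xstar : EuclideanSpace ℝ (Fin d))
    (a L κ β : ℝ) (hf : ContDiff ℝ 1 f) (ha : 0 < a)
    (hgrad : ∀ x, ‖gradient f x‖ ≤ L * (1 + ‖x‖ ^ a))
    (hκ : 0 < κ) (hβ : 1 ≤ β)
    (hgrowth : ∀ x, f xstar + κ / 2 * ‖x - xstar‖ ^ β ≤ f x)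
    (α : ℝ) (hα : 0 < α)
    (μ μ' : Measure (EuclideanSpace ℝ (Fin d)))
    (hμ : IsProbabilityMeasure μ) (hμ' : IsProbabilityMeasure μ')
    -- finite first moments
    (hmom : Integrable (fun x => ‖x‖) μ) (hmom' : Integrable (fun x => ‖x‖) μ')
    -- `π` is a coupling of `μ` and `μ'`
    (cpl : Measure (EuclideanSpace ℝ (Fin d) × EuclideanSpace ℝ (Fin d)))
    (hπ1 : cpl.map Prod.fst = μ) (hπ2 : cpl.map Prod.snd = μ') :
    ‖thetaAlpha α f μ - thetaAlpha α f μ'‖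
      ≤ (∫ p, ‖p.1 - p.2‖ ∂cpl)
          * ((Real.exp (-α * f xstar) * ⨆ z : EuclideanSpace ℝ (Fin d),
                Real.exp (-(κ * α / 2) * ‖z - xstar‖ ^ β)
                  * (1 + α * L * ‖z‖ + α * L * ‖z‖ ^ (a + 1)))
              + ‖thetaAlpha α f μ'‖
                * (Real.exp (-α * f xstar) * ⨆ z : EuclideanSpace ℝ (Fin d),
                    Real.exp (-(κ * α / 2) * ‖z - xstar‖ ^ β) * (α * L * (1 + ‖z‖ ^ a))))
          / ∫ x, Real.exp (-α * f x) ∂μ := by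
  have hc : 0 < κ * α / 2 := by positivity
  have hfd : Differentiable ℝ f := hf.differentiable one_ne_zero
  have hgrad' (x : EuclideanSpace ℝ (Fin d)) : ‖fderiv ℝ f x‖ ≤ L * (1 + ‖x‖ ^ a) := by
    simpa [gradient] using hgrad x
  have hmin (x : EuclideanSpace ℝ (Fin d)) : f xstar ≤ f x :=
    (le_add_of_nonneg_right (by positivity)).trans (hgrowth x)
  have hbdd₀ := ((bddAbove_range_exp_neg_mul_norm_sub_rpow_mul hc hβ le_rfl xstar 1).range_add
    (bddAbove_range_exp_neg_mul_norm_sub_rpow_mul hc hβ zero_le_one xstar (α * L))).range_add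
    (bddAbove_range_exp_neg_mul_norm_sub_rpow_mul (s := a + 1) hc hβ (by positivity) xstar (α * L))
  have hbdd₁ := (bddAbove_range_exp_neg_mul_norm_sub_rpow_mul hc hβ le_rfl xstar (α * L)).range_add
    (bddAbove_range_exp_neg_mul_norm_sub_rpow_mul hc hβ ha.le xstar (α * L))
  simp only [rpow_zero, rpow_one, one_mul, ← mul_add] at hbdd₀ hbdd₁
  have hw (ρ : Measure (EuclideanSpace ℝ (Fin d))) [IsFiniteMeasure ρ] :
      Integrable (fun x => exp (-α * f x)) ρ :=
    integrable_exp_neg_mul hf.continuous hα.le hmin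
  rw [thetaAlpha_eq_weightedMean, thetaAlpha_eq_weightedMean]
  exact norm_weightedMean_sub_le hπ1 hπ2 (hw μ) (hw μ')
    (integrable_exp_neg_mul_smul_self hf.continuous hα.le hmin hmom)
    (integrable_exp_neg_mul_smul_self hf.continuous hα.le hmin hmom')
    (integral_exp_pos (hw μ)) (integral_exp_pos (hw μ')).ne'
    (integrable_norm_sub_of_map_eq hπ1 hπ2 hmom hmom')
    (norm_exp_neg_mul_smul_sub_le hfd fun x => (exp_neg_mul_mul_one_add_le hα.le ha.le hgrowth
      hgrad' x).trans (mul_le_mul_of_nonneg_left (le_ciSup hbdd₀ x) (exp_pos _).le))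
    (abs_exp_neg_mul_sub_le hfd fun x => (exp_neg_mul_mul_norm_fderiv_le hα.le hgrowth
      hgrad' x).trans (mul_le_mul_of_nonneg_left (le_ciSup hbdd₁ x) (exp_pos _).le))

/-- Lemma 1, third claim: stability of the consensus point `θ_α`
with respect to couplings (hence the Wasserstein-1 distance). -/
theorem stmt9 {d : ℕ}
    (f : EuclideanSpace ℝ (Fin d) → ℝ) (xstar : EuclideanSpace ℝ (Fin d))
    (a L κ β : ℝ) (hf : ContDiff ℝ 1 f) (ha : 0 < a) (hL : 0 < L)
    (hgrad : ∀ x, ‖gradient f x‖ ≤ L * (1 + ‖x‖ ^ a))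
    (hκ : 0 < κ) (hβ : 1 ≤ β)
    (hgrowth : ∀ x, f xstar + κ / 2 * ‖x - xstar‖ ^ β ≤ f x)
    (hmin : ∀ x, x ≠ xstar → f xstar < f x)
    (α : ℝ) (hα : 0 < α)
    (μ μ' : Measure (EuclideanSpace ℝ (Fin d)))
    (hμ : IsProbabilityMeasure μ) (hμ' : IsProbabilityMeasure μ')
    -- finite first moments
    (hmom : Integrable (fun x => ‖x‖) μ) (hmom' : Integrable (fun x => ‖x‖) μ')
    -- `π` is a coupling of `μ` and `μ'`
    (cpl : Measure (EuclideanSpace ℝ (Fin d) × EuclideanSpace ℝ (Fin d)))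
    (hcpl : IsProbabilityMeasure cpl)
    (hπ1 : cpl.map Prod.fst = μ) (hπ2 : cpl.map Prod.snd = μ') :
    ‖thetaAlpha α f μ - thetaAlpha α f μ'‖
      ≤ (∫ p, ‖p.1 - p.2‖ ∂cpl)
          * ((Real.exp (-α * f xstar) * ⨆ z : EuclideanSpace ℝ (Fin d),
                Real.exp (-(κ * α / 2) * ‖z - xstar‖ ^ β)
                  * (1 + α * L * ‖z‖ + α * L * ‖z‖ ^ (a + 1)))
              + ‖thetaAlpha α f μ'‖
                * (Real.exp (-α * f xstar) * ⨆ z : EuclideanSpace ℝ (Fin d),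
                    Real.exp (-(κ * α / 2) * ‖z - xstar‖ ^ β) * (α * L * (1 + ‖z‖ ^ a))))
          / ∫ x, Real.exp (-α * f x) ∂μ :=
  stmt9_general f xstar a L κ β hf ha hgrad hκ hβ hgrowth α hα μ μ' hμ hμ' hmom hmom' cpl hπ1 hπ2
end

section
/- Let d ≥ 1, let α, γ, r > 0, let m, x* ∈ ℝ^d, and let σ² satisfy γ/(2α) ≤ σ² ≤ γ/α. Let Z be a random vector with law the Gaussian measure on ℝ^d with mean m and covariance σ² I_d. Then P(‖Z − x*‖ ≥ r) ≤ 1 − V_d · (r√α)^d · (2πγ)^{−d/2} · exp( −(4α/γ)(‖m − x*‖² + r²) ), where V_d denotes the Lebesgue volume of the unit Euclidean ball in ℝ^d. -/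
/-! The event is the complement of `{Z ∈ B(x*, r)}`. On that ball `‖y - m‖² ≤ 2 (‖m - x*‖² + r²)`,
so, as `γ / (2α) ≤ σ² ≤ γ / α`, the Gaussian density there is at least
`(√α)^d (2πγ)^(-d/2) exp(-(4α/γ)(‖m - x*‖² + r²))`; multiplying by `vol B(x*, r) = r^d V_d`
bounds `P(Z ∈ B(x*, r))` from below. -/

open MeasureTheory Real Set

lemma measureReal_le_norm_sub_eq_one_sub {Ω E : Type*} [MeasurableSpace Ω] {P : Measure Ω}
    [IsProbabilityMeasure P] [SeminormedAddCommGroup E] [MeasurableSpace E]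
    [OpensMeasurableSpace E] {Z : Ω → E} (hZ : Measurable Z) (x : E) (r : ℝ) :
    P.real {ω | r ≤ ‖Z ω - x‖} = 1 - (P.map Z).real (Metric.ball x r) := by
  have hcompl : {ω | r ≤ ‖Z ω - x‖} = (Z ⁻¹' Metric.ball x r)ᶜ := by
    ext ω
    simp [dist_eq_norm]
  rw [hcompl, probReal_compl_eq_one_sub (hZ measurableSet_ball),
    map_measureReal_apply hZ measurableSet_ball]

lemma mul_le_withDensity_apply {α : Type*} [MeasurableSpace α] (μ : Measure α)
    {f : α → ENNReal} {s : Set α} {c : ENNReal} (hs : MeasurableSet s)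
    (hc : ∀ x ∈ s, c ≤ f x) : c * μ s ≤ μ.withDensity f s := by
  rw [withDensity_apply _ hs, ← setLIntegral_const]
  exact setLIntegral_mono' hs hc

lemma sqrt_pow_mul_rpow_le_rpow {α γ σ2 : ℝ} (d : ℕ) (hα : 0 < α) (hγ : 0 < γ)
    (hσ2 : 0 < σ2) (hσu : σ2 ≤ γ / α) :
    √α ^ d * (2 * π * γ) ^ (-(d : ℝ) / 2) ≤ (2 * π * σ2) ^ (-(d : ℝ) / 2) := by
  have hsqrt : √α ^ d = (α ^ (-(d : ℝ) / 2))⁻¹ := by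
    rw [← Real.rpow_natCast, Real.sqrt_eq_rpow, ← Real.rpow_mul hα.le, ← Real.rpow_neg hα.le]
    ring_nf
  calc √α ^ d * (2 * π * γ) ^ (-(d : ℝ) / 2) = (2 * π * (γ / α)) ^ (-(d : ℝ) / 2) := by
        rw [hsqrt, mul_div_assoc', Real.div_rpow (by positivity) hα.le, inv_mul_eq_div]
    _ ≤ (2 * π * σ2) ^ (-(d : ℝ) / 2) :=
        Real.rpow_le_rpow_of_nonpos (by positivity) (by gcongr) (by
          rw [neg_div]; exact neg_nonpos.2 (by positivity))

lemma exp_le_exp_neg_norm_sub_sq_div {E : Type*} [SeminormedAddCommGroup E]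
    {α γ r σ2 : ℝ} (hα : 0 < α) (hγ : 0 < γ) (hσl : γ / (2 * α) ≤ σ2)
    {m x y : E} (hy : ‖y - x‖ < r) :
    exp (-(4 * α / γ) * (‖m - x‖ ^ 2 + r ^ 2)) ≤ exp (-‖y - m‖ ^ 2 / (2 * σ2)) := by
  have hσ2 : 0 < σ2 := lt_of_lt_of_le (by positivity) hσl
  have hγσ : γ ≤ 2 * α * σ2 := by rwa [div_le_iff₀ (by positivity), mul_comm] at hσl
  have hdist : ‖y - m‖ ^ 2 ≤ 2 * (‖m - x‖ ^ 2 + r ^ 2) := by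
    have htri : ‖y - m‖ ≤ r + ‖m - x‖ := by
      linarith [norm_sub_le_norm_sub_add_norm_sub y x m, norm_sub_rev x m]
    calc ‖y - m‖ ^ 2 ≤ (r + ‖m - x‖) ^ 2 := by gcongr
      _ ≤ 2 * (‖m - x‖ ^ 2 + r ^ 2) := by nlinarith [add_sq_le (a := r) (b := ‖m - x‖)]
  rw [exp_le_exp, neg_div, neg_mul, neg_le_neg_iff, div_le_iff₀ (by positivity)]
  calc ‖y - m‖ ^ 2 ≤ 2 * (‖m - x‖ ^ 2 + r ^ 2) := hdist
    _ ≤ 2 * (‖m - x‖ ^ 2 + r ^ 2) * (4 * α * σ2 / γ) :=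
        le_mul_of_one_le_right (by positivity) ((one_le_div hγ).2 (by linarith))
    _ = 4 * α / γ * (‖m - x‖ ^ 2 + r ^ 2) * (2 * σ2) := by ring

lemma ofReal_le_gaussianE_ball {d : ℕ} {α γ r σ2 : ℝ} (hα : 0 < α) (hγ : 0 < γ) (hr : 0 < r)
    (hσl : γ / (2 * α) ≤ σ2) (hσu : σ2 ≤ γ / α) (m x : EuclideanSpace ℝ (Fin d)) :
    ENNReal.ofReal ((volume (Metric.ball (0 : EuclideanSpace ℝ (Fin d)) 1)).toReal
        * (r * √α) ^ d * (2 * π * γ) ^ (-(d : ℝ) / 2)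
        * exp (-(4 * α / γ) * (‖m - x‖ ^ 2 + r ^ 2)))
      ≤ gaussianE d m σ2 (Metric.ball x r) := by
  have hσ2 : 0 < σ2 := lt_of_lt_of_le (by positivity) hσl
  set c := √α ^ d * (2 * π * γ) ^ (-(d : ℝ) / 2) * exp (-(4 * α / γ) * (‖m - x‖ ^ 2 + r ^ 2))
  have hdensity : ∀ y ∈ Metric.ball x r,
      c ≤ (2 * π * σ2) ^ (-(d : ℝ) / 2) * exp (-‖y - m‖ ^ 2 / (2 * σ2)) := fun y hy =>
    mul_le_mul (sqrt_pow_mul_rpow_le_rpow d hα hγ hσ2 hσu)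
      (exp_le_exp_neg_norm_sub_sq_div hα hγ hσl (mem_ball_iff_norm.1 hy)) (exp_pos _).le
      (by positivity)
  have hvolume : volume (Metric.ball x r)
      = ENNReal.ofReal (r ^ d) * volume (Metric.ball (0 : EuclideanSpace ℝ (Fin d)) 1) := by
    rw [Measure.addHaar_ball_of_pos volume x hr, finrank_euclideanSpace_fin]
  calc _ = ENNReal.ofReal c * volume (Metric.ball x r) := by
        rw [hvolume, ← mul_assoc, ← ENNReal.ofReal_mul (by positivity)]
        conv_rhs => rw [← ENNReal.ofReal_toReal measure_ball_lt_top.ne]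
        rw [← ENNReal.ofReal_mul (by positivity), mul_pow]
        congr 1
        ring
    _ ≤ gaussianE d m σ2 (Metric.ball x r) :=
        mul_le_withDensity_apply _ measurableSet_ball fun y hy =>
          ENNReal.ofReal_le_ofReal (hdensity y hy)

theorem stmt16_general {d : ℕ} (α γ r : ℝ) (hα : 0 < α) (hγ : 0 < γ) (hr : 0 < r)
    (m xstar : EuclideanSpace ℝ (Fin d)) (σ2 : ℝ)
    (hσl : γ / (2 * α) ≤ σ2) (hσu : σ2 ≤ γ / α)
    (Ω : Type) [MeasurableSpace Ω] (P : Measure Ω) [IsProbabilityMeasure P]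
    (Z : Ω → EuclideanSpace ℝ (Fin d)) (hZ : Measurable Z)
    (hlaw : P.map Z = gaussianE d m σ2) :
    (P {ω | r ≤ ‖Z ω - xstar‖}).toReal
      ≤ 1 - (volume (Metric.ball (0 : EuclideanSpace ℝ (Fin d)) 1)).toReal
          * (r * Real.sqrt α) ^ d * (2 * Real.pi * γ) ^ (-(d : ℝ) / 2)
          * Real.exp (-(4 * α / γ) * (‖m - xstar‖ ^ 2 + r ^ 2)) := by
  have hball := ofReal_le_gaussianE_ball hα hγ hr hσl hσu m xstar
  rw [← hlaw, ENNReal.ofReal_le_iff_le_toReal (measure_ne_top _ _)] at hball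
  rw [← measureReal_def, measureReal_le_norm_sub_eq_one_sub hZ]
  exact sub_le_sub_left hball 1

/-- Gaussian small-ball/tail estimate:
`P(‖Z − x*‖ ≥ r) ≤ 1 − V_d (r√α)^d (2πγ)^{−d/2} exp(−(4α/γ)(‖m − x*‖² + r²))`. -/
theorem stmt16 {d : ℕ} (hd : 1 ≤ d) (α γ r : ℝ) (hα : 0 < α) (hγ : 0 < γ) (hr : 0 < r)
    (m xstar : EuclideanSpace ℝ (Fin d)) (σ2 : ℝ)
    (hσl : γ / (2 * α) ≤ σ2) (hσu : σ2 ≤ γ / α)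
    (Ω : Type) [MeasurableSpace Ω] (P : Measure Ω) [IsProbabilityMeasure P]
    (Z : Ω → EuclideanSpace ℝ (Fin d)) (hZ : Measurable Z)
    (hlaw : P.map Z = gaussianE d m σ2) :
    (P {ω | r ≤ ‖Z ω - xstar‖}).toReal
      ≤ 1 - (volume (Metric.ball (0 : EuclideanSpace ℝ (Fin d)) 1)).toReal
          * (r * Real.sqrt α) ^ d * (2 * Real.pi * γ) ^ (-(d : ℝ) / 2)
          * Real.exp (-(4 * α / γ) * (‖m - xstar‖ ^ 2 + r ^ 2)) :=
  stmt16_general α γ r hα hγ hr m xstar σ2 hσl hσu Ω P Z hZ hlaw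
end

section
/- Let Z_1, …, Z_q be i.i.d. ℝ^d-valued random vectors with E‖Z_1‖² < ∞, let x* ∈ ℝ^d and r > 0. Then E[ min_{1 ≤ i ≤ q} ‖Z_i − x*‖ ] ≤ r + (E‖Z_1 − x*‖²)^{1/2} · P(‖Z_1 − x*‖ > r)^{q/2}. -/
/-!
On the event `A` that every `Z i` lies farther than `r` from `x*`, the minimum is at most
`‖Z_1 − x*‖`; off `A` it is at most `r`. Hence `E[min] ≤ r + E[‖Z_1 − x*‖ 1_A]`, and
Cauchy–Schwarz bounds the last term by `(E‖Z_1 − x*‖²)^{1/2} P(A)^{1/2}`, where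
`P(A) = P(‖Z_1 − x*‖ > r)^q` by independence and identical distribution.
-/

open MeasureTheory Real Set

variable {Ω : Type*} [MeasurableSpace Ω] {μ : Measure Ω}

theorem setIntegral_norm_le_sqrt_integral_sq_mul_sqrt_measureReal {E : Type*}
    [NormedAddCommGroup E] {f : Ω → E} (hf : MemLp f 2 μ) {s : Set Ω} (hs : MeasurableSet s)
    (hμs : μ s ≠ ⊤) :
    ∫ ω in s, ‖f ω‖ ∂μ ≤ √(∫ ω, ‖f ω‖ ^ 2 ∂μ) * √(μ.real s) := by
  have hind : MemLp (s.indicator fun _ => (1 : ℝ)) 2 μ :=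
    memLp_indicator_const 2 hs 1 (Or.inr hμs)
  have holder := integral_mul_le_Lp_mul_Lq_of_nonneg .two_two (ae_of_all _ fun ω => norm_nonneg _)
    (ae_of_all _ (indicator_nonneg fun _ _ => zero_le_one)) (by simpa using hf.norm)
    (by simpa using hind)
  have hlhs : ∫ ω, ‖f ω‖ * s.indicator (fun _ => (1 : ℝ)) ω ∂μ = ∫ ω in s, ‖f ω‖ ∂μ := by
    rw [← integral_indicator hs]
    congr 1 with ω
    by_cases hω : ω ∈ s <;> simp [hω]
  have hind_sq : ∫ ω, s.indicator (fun _ => (1 : ℝ)) ω ^ 2 ∂μ = μ.real s := by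
    rw [← integral_indicator_one hs]
    congr 1 with ω
    by_cases hω : ω ∈ s <;> simp [hω]
  simp only [rpow_two] at holder
  rwa [hlhs, hind_sq, ← sqrt_eq_rpow, ← sqrt_eq_rpow] at holder

theorem integral_iInf_le_add_setIntegral [IsProbabilityMeasure μ] {ι : Type*} [Finite ι]
    {f : ι → Ω → ℝ} (hf : ∀ i, Measurable (f i)) (hf_nonneg : ∀ i ω, 0 ≤ f i ω) (j : ι)
    (hfj : Integrable (f j) μ) {r : ℝ} (hr : 0 ≤ r) :
    ∫ ω, ⨅ i, f i ω ∂μ ≤ r + ∫ ω in ⋂ i, f i ⁻¹' Ioi r, f j ω ∂μ := by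
  have : Nonempty ι := ⟨j⟩
  set A := ⋂ i, f i ⁻¹' Ioi r
  have hA : MeasurableSet A := .iInter fun i => hf i measurableSet_Ioi
  have hbdd : ∀ ω, BddBelow (range fun i => f i ω) := fun ω => (finite_range _).bddBelow
  have hpointwise : ∀ ω, ⨅ i, f i ω ≤ r + A.indicator (f j) ω := by
    intro ω
    by_cases hω : ω ∈ A
    · rw [indicator_of_mem hω]
      exact (ciInf_le (hbdd ω) j).trans (le_add_of_nonneg_left hr)
    · obtain ⟨i, hi⟩ : ∃ i, f i ω ≤ r := by simpa [A] using hω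
      rw [indicator_of_notMem hω, add_zero]
      exact (ciInf_le (hbdd ω) i).trans hi
  have hinf_int : Integrable (fun ω => ⨅ i, f i ω) μ := by
    refine hfj.mono (Measurable.iInf hf).aestronglyMeasurable (ae_of_all _ fun ω => ?_)
    have hinf_nonneg : 0 ≤ ⨅ i, f i ω := le_ciInf fun i => hf_nonneg i ω
    rw [norm_of_nonneg hinf_nonneg, norm_of_nonneg (hf_nonneg j ω)]
    exact ciInf_le (hbdd ω) j
  calc ∫ ω, ⨅ i, f i ω ∂μ ≤ ∫ ω, (r + A.indicator (f j) ω) ∂μ :=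
        integral_mono hinf_int ((integrable_const r).add (hfj.indicator hA)) hpointwise
    _ = r + ∫ ω in A, f j ω ∂μ := by
        rw [integral_add (integrable_const r) (hfj.indicator hA), integral_indicator hA]
        simp

theorem ProbabilityTheory.iIndepFun.measure_iInter_preimage_eq_pow {ι β : Type*} [Fintype ι]
    [MeasurableSpace β] {Z : ι → Ω → β} (hZ : ∀ i, Measurable (Z i))
    (hindep : iIndepFun Z μ) {j : ι} (hident : ∀ i, μ.map (Z i) = μ.map (Z j))
    {s : Set β} (hs : MeasurableSet s) :
    μ (⋂ i, Z i ⁻¹' s) = μ (Z j ⁻¹' s) ^ Fintype.card ι := by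
  have hprod := hindep.measure_inter_preimage_eq_mul Finset.univ (fun _ _ => hs)
  have heach : ∀ i, μ (Z i ⁻¹' s) = μ (Z j ⁻¹' s) := fun i => by
    rw [← Measure.map_apply (hZ i) hs, ← Measure.map_apply (hZ j) hs, hident i]
  simpa [heach] using hprod

/-- bound on the expected minimum distance of `q` i.i.d. random vectors
to a point: `E[min_i ‖Z_i − x*‖] ≤ r + (E‖Z_1 − x*‖²)^{1/2} P(‖Z_1 − x*‖ > r)^{q/2}`. -/
theorem stmt18 {d : ℕ} (q : ℕ) (hq : 0 < q)
    (Ω : Type) [MeasurableSpace Ω] (P : Measure Ω) [IsProbabilityMeasure P]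
    (Z : Fin q → Ω → EuclideanSpace ℝ (Fin d))
    (hmeas : ∀ i, Measurable (Z i))
    (hindep : ProbabilityTheory.iIndepFun Z P)
    (hident : ∀ i : Fin q, P.map (Z i) = P.map (Z ⟨0, hq⟩))
    (hL2 : Integrable (fun ω => ‖Z ⟨0, hq⟩ ω‖ ^ 2) P)
    (xstar : EuclideanSpace ℝ (Fin d)) (r : ℝ) (hr : 0 < r) :
    ∫ ω, (⨅ i : Fin q, ‖Z i ω - xstar‖) ∂P
      ≤ r + Real.sqrt (∫ ω, ‖Z ⟨0, hq⟩ ω - xstar‖ ^ 2 ∂P)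
          * ((P {ω | r < ‖Z ⟨0, hq⟩ ω - xstar‖}).toReal) ^ ((q : ℝ) / 2) := by
  set j : Fin q := ⟨0, hq⟩
  set s : Set (EuclideanSpace ℝ (Fin d)) := {x | r < ‖x - xstar‖}
  have hs : MeasurableSet s := measurableSet_lt measurable_const (measurable_id.sub_const _).norm
  have hdist : ∀ i, Measurable fun ω => ‖Z i ω - xstar‖ := fun i => ((hmeas i).sub_const _).norm
  have hZj : MemLp (fun ω => Z j ω - xstar) 2 P :=
    ((memLp_two_iff_integrable_sq_norm (hmeas j).aestronglyMeasurable).2 hL2).sub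
      (memLp_const xstar)
  have hA : P.real (⋂ i, Z i ⁻¹' s) = P.real (Z j ⁻¹' s) ^ q := by
    simp [measureReal_def, hindep.measure_iInter_preimage_eq_pow hmeas hident hs]
  calc ∫ ω, (⨅ i, ‖Z i ω - xstar‖) ∂P
      ≤ r + ∫ ω in ⋂ i, Z i ⁻¹' s, ‖Z j ω - xstar‖ ∂P :=
        integral_iInf_le_add_setIntegral hdist (fun _ _ => norm_nonneg _) j
          (hZj.integrable one_le_two).norm hr.le
    _ ≤ r + √(∫ ω, ‖Z j ω - xstar‖ ^ 2 ∂P) * √(P.real (⋂ i, Z i ⁻¹' s)) := by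
        gcongr
        exact setIntegral_norm_le_sqrt_integral_sq_mul_sqrt_measureReal hZj
          (.iInter fun i => hmeas i hs) (measure_ne_top _ _)
    _ = _ := by
        rw [hA, ← rpow_natCast, sqrt_eq_rpow (_ ^ (q : ℝ)), ← rpow_mul measureReal_nonneg,
          mul_one_div]
        rfl
end
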